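/- arXiv:math/0406588 — 4 statements merged into one kernel-verified Lean document; each statement's English description precedes it below -/
import Mathlib

section
/- Let d be a positive integer. For all integers r_1, ..., r_d, if the product ∏_{ℓ=1}^{d} (1 - ℓX)^{r_ℓ} equals 1 in the unit group (ℤ[X]/(X^{d+1}))^×, then r_1 = r_2 = ... = r_d = 0. In other words, the elements 1 - X, 1 - 2X, ..., 1 - dX generate a free abelian subgroup of (ℤ[X]/(X^{d+1}))^× of rank d, with these elements as free generators. -/
/-!
Clearing negative exponents turns the relation into `P ≡ Q mod X^(d+1)` with
`P = ∏ (1 - ℓX)^(r ℓ)⁺` and `Q = ∏ (1 - ℓX)^(r ℓ)⁻`, so `X^d` divides `P'Q - PQ'`. By the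
logarithmic derivative, `(P'Q - PQ') · ∏ (1 - ℓX) = -PQ · S` with
`S = ∑ r ℓ · ℓ · ∏_{j ≠ ℓ} (1 - jX)`, and `PQ` has constant term `1`, so `X^d ∣ S`. As
`deg S < d`, `S = 0`, and evaluating at `X = 1/ℓ` leaves only the term
`r ℓ · ℓ · ∏_{j ≠ ℓ} (1 - j/ℓ)`.
-/

/-- The truncated polynomial ring `ℤ[X]/(X^(d+1))`. -/
def TruncPoly (d : ℕ) : Type :=
  Polynomial ℤ ⧸ Ideal.span ({Polynomial.X ^ (d + 1)} : Set (Polynomial ℤ))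

noncomputable instance (d : ℕ) : CommRing (TruncPoly d) :=
  Ideal.Quotient.commRing _

/-- The residue class of `1 - ℓ·X` in `ℤ[X]/(X^(d+1))`. -/
noncomputable def oneSubMulX (d ℓ : ℕ) : TruncPoly d :=
  Ideal.Quotient.mk (Ideal.span ({Polynomial.X ^ (d + 1)} : Set (Polynomial ℤ)))
    (1 - (ℓ : Polynomial ℤ) * Polynomial.X)

open Polynomial Finset

theorem derivative_pow_mul_self {R : Type*} [CommSemiring R] (p : R[X]) (n : ℕ) :
    derivative (p ^ n) * p = C (n : R) * p ^ n * derivative p := by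
  cases n with
  | zero => simp
  | succ n => rw [derivative_pow_succ, pow_succ]; push_cast; ring

section Derivative

variable {R : Type*} [CommRing R]

theorem derivative_prod_pow_mul_prod {ι : Type*} [DecidableEq ι] (s : Finset ι) (v : ι → R[X])
    (e : ι → ℕ) :
    derivative (∏ i ∈ s, v i ^ e i) * ∏ i ∈ s, v i =
      (∏ i ∈ s, v i ^ e i) * ∑ i ∈ s, C (e i : R) * derivative (v i) * ∏ j ∈ s.erase i, v j := by
  rw [derivative_prod_finset, sum_mul, mul_sum]
  refine sum_congr rfl fun i hi => ?_
  rw [← mul_prod_erase s v hi, ← mul_prod_erase s (fun j => v j ^ e j) hi]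
  linear_combination (∏ j ∈ s.erase i, v j ^ e j) * (∏ j ∈ s.erase i, v j) *
    derivative_pow_mul_self (v i) (e i)

theorem pow_dvd_derivative_mul_sub_mul_derivative {p q r : R[X]} {n : ℕ}
    (h : r ^ (n + 1) ∣ p - q) : r ^ n ∣ derivative p * q - p * derivative q := by
  have hderiv : r ^ n ∣ derivative (p - q) := by
    simpa using pow_sub_one_dvd_derivative_of_pow_dvd h
  have hsub : r ^ n ∣ p - q := (pow_dvd_pow r n.le_succ).trans h
  have : derivative p * q - p * derivative q =
      derivative (p - q) * q - (p - q) * derivative q := by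
    rw [derivative_sub]; ring
  rw [this]
  exact (hderiv.mul_right q).sub (hsub.mul_right _)

end Derivative

section LinearFactors

variable {ι : Type*} [DecidableEq ι]

theorem natDegree_sum_C_mul_prod_erase_one_sub_C_mul_X_lt {R : Type*} [CommRing R]
    {s : Finset ι} (hs : s.Nonempty) (a c : ι → R) :
    (∑ i ∈ s, C (c i) * ∏ j ∈ s.erase i, (1 - C (a j) * X)).natDegree < #s := by
  have hfactor : ∀ j, (1 - C (a j) * X).natDegree ≤ 1 := fun j => by compute_degree
  have hterm : ∀ i ∈ s, (C (c i) * ∏ j ∈ s.erase i, (1 - C (a j) * X)).natDegree ≤ #s - 1 := by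
    intro i hi
    calc (C (c i) * ∏ j ∈ s.erase i, (1 - C (a j) * X)).natDegree
        _ ≤ (∏ j ∈ s.erase i, (1 - C (a j) * X)).natDegree := natDegree_C_mul_le _ _
        _ ≤ ∑ j ∈ s.erase i, (1 - C (a j) * X).natDegree := natDegree_prod_le _ _
        _ ≤ #(s.erase i) • 1 := sum_le_card_nsmul _ _ _ fun j _ => hfactor j
        _ = #s - 1 := by rw [smul_eq_mul, mul_one, card_erase_of_mem hi]
  have := natDegree_sum_le_of_forall_le _ _ hterm
  have := hs.card_pos
  omega

variable {K : Type*} [Field K]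

theorem eq_zero_of_sum_C_mul_prod_erase_one_sub_C_mul_X_eq_zero {s : Finset ι} {a : ι → K}
    (ha : Set.InjOn a s) {c : ι → K}
    (h : ∑ i ∈ s, C (c i) * ∏ j ∈ s.erase i, (1 - C (a j) * X) = 0)
    {i : ι} (hi : i ∈ s) (ha0 : a i ≠ 0) : c i = 0 := by
  -- at `X = (a i)⁻¹` every term but the `i`-th contains the vanishing factor `1 - a i * X`
  have heval := congrArg (eval (a i)⁻¹) h
  simp only [eval_finsetSum, eval_mul, eval_C, eval_prod, eval_sub, eval_one, eval_X,
    eval_zero] at heval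
  rw [sum_eq_single_of_mem i hi] at heval
  · refine (mul_eq_zero.mp heval).resolve_right (prod_ne_zero_iff.mpr fun j hj => ?_)
    rw [sub_ne_zero, ne_comm, Ne, mul_inv_eq_one₀ ha0]
    exact fun hji => ne_of_mem_erase hj (ha (mem_of_mem_erase hj) hi hji)
  · intro k _ hki
    refine mul_eq_zero_of_right _ (prod_eq_zero (mem_erase.mpr ⟨Ne.symm hki, hi⟩) ?_)
    rw [mul_inv_cancel₀ ha0, sub_self]

theorem natCast_eq_of_X_pow_dvd_prod_pow_sub_prod_pow {s : Finset ι} {a : ι → K}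
    (ha : Set.InjOn a s) (ha0 : ∀ i ∈ s, a i ≠ 0) {m n : ι → ℕ}
    (h : X ^ (#s + 1) ∣
      ∏ i ∈ s, (1 - C (a i) * X) ^ m i - ∏ i ∈ s, (1 - C (a i) * X) ^ n i) :
    ∀ i ∈ s, (m i : K) = n i := by
  set v : ι → K[X] := fun i => 1 - C (a i) * X
  set P := ∏ i ∈ s, v i ^ m i
  set Q := ∏ i ∈ s, v i ^ n i
  set S := ∑ i ∈ s, C ((m i - n i : K) * a i) * ∏ j ∈ s.erase i, v j
  have hv : ∀ i, derivative (v i) = -C (a i) := fun i => by simp [v]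
  have hlogderiv : (derivative P * Q - P * derivative Q) * ∏ i ∈ s, v i = -(P * Q * S) := by
    have hP := derivative_prod_pow_mul_prod s v m
    have hQ := derivative_prod_pow_mul_prod s v n
    have hsum : ∑ i ∈ s, C (m i : K) * derivative (v i) * ∏ j ∈ s.erase i, v j -
        ∑ i ∈ s, C (n i : K) * derivative (v i) * ∏ j ∈ s.erase i, v j = -S := by
      rw [← sum_sub_distrib, ← sum_neg_distrib]
      refine sum_congr rfl fun i _ => ?_
      rw [hv, C_mul, C_sub]
      ring
    linear_combination Q * hP - P * hQ + P * Q * hsum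
  have hS : X ^ #s ∣ S := by
    have hPQS : X ^ #s ∣ P * Q * S := by
      rw [← dvd_neg, ← hlogderiv]
      exact (pow_dvd_derivative_mul_sub_mul_derivative h).mul_right _
    refine prime_X.pow_dvd_of_dvd_mul_left _ ?_ hPQS
    simp [X_dvd_iff, coeff_zero_eq_eval_zero, P, Q, v, eval_prod]
  intro i hi
  have hS0 : S = 0 := eq_zero_of_dvd_of_natDegree_lt hS <| by
    rw [natDegree_X_pow]
    exact natDegree_sum_C_mul_prod_erase_one_sub_C_mul_X_lt ⟨i, hi⟩ _ _
  have := eq_zero_of_sum_C_mul_prod_erase_one_sub_C_mul_X_eq_zero ha hS0 hi (ha0 i hi)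
  exact sub_eq_zero.mp ((mul_eq_zero.mp this).resolve_right (ha0 i hi))

end LinearFactors

theorem prod_pow_toNat_eq_prod_pow_toNat_neg {G ι : Type*} [CommGroup G] {s : Finset ι}
    {g : ι → G} {r : ι → ℤ} (h : ∏ i ∈ s, g i ^ r i = 1) :
    ∏ i ∈ s, g i ^ (r i).toNat = ∏ i ∈ s, g i ^ (-r i).toNat := by
  rw [← div_eq_one, ← prod_div_distrib, ← h]
  refine prod_congr rfl fun i _ => ?_
  rw [← zpow_natCast, ← zpow_natCast, div_eq_mul_inv, ← zpow_sub, Int.toNat_sub_toNat_neg]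

theorem X_pow_succ_dvd_prod_pow_sub_prod_pow_of_prod_pow_eq {d : ℕ} {s : Finset ℕ}
    {u : ℕ → (TruncPoly d)ˣ} (hu : ∀ ℓ, (u ℓ : TruncPoly d) = oneSubMulX d ℓ) {e f : ℕ → ℕ}
    (h : ∏ ℓ ∈ s, u ℓ ^ e ℓ = ∏ ℓ ∈ s, u ℓ ^ f ℓ) :
    (X : ℤ[X]) ^ (d + 1) ∣
      ∏ ℓ ∈ s, (1 - (ℓ : ℤ[X]) * X) ^ e ℓ - ∏ ℓ ∈ s, (1 - (ℓ : ℤ[X]) * X) ^ f ℓ := by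
  rw [← Ideal.mem_span_singleton, ← Ideal.Quotient.eq]
  have hval := congrArg Units.val h
  simp only [Units.coe_prod, Units.val_pow_eq_pow_val, hu, oneSubMulX] at hval
  simp only [map_prod, map_pow]
  exact hval

theorem chern_generators_free_general (d : ℕ) (r : ℕ → ℤ)
    (u : ℕ → (TruncPoly d)ˣ)
    (hu : ∀ ℓ, (u ℓ : TruncPoly d) = oneSubMulX d ℓ)
    (h : ∏ ℓ ∈ Finset.Icc 1 d, u ℓ ^ r ℓ = 1) :
    ∀ ℓ ∈ Finset.Icc 1 d, r ℓ = 0 := by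
  have hrel := Polynomial.map_dvd (Int.castRingHom ℚ) <|
    X_pow_succ_dvd_prod_pow_sub_prod_pow_of_prod_pow_eq hu (prod_pow_toNat_eq_prod_pow_toNat_neg h)
  simp only [Polynomial.map_sub, Polynomial.map_prod, Polynomial.map_pow, Polynomial.map_mul,
    Polynomial.map_one, Polynomial.map_X, ← C_eq_natCast] at hrel
  have hcast := natCast_eq_of_X_pow_dvd_prod_pow_sub_prod_pow (s := Icc 1 d)
    (a := fun ℓ : ℕ => (ℓ : ℚ)) Nat.cast_injective.injOn (by simp; omega) (by simpa using hrel)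
  intro ℓ hℓ
  have := Nat.cast_injective (hcast ℓ hℓ)
  omega

/-- First assertion of Lemma 3.2: in the unit group of `ℤ[X]/(X^(d+1))`, the
residue classes of `1 - ℓX` for `ℓ = 1, …, d` are free generators of the
subgroup they generate: any ℤ-linear (multiplicative) relation among them is
trivial. -/
theorem chern_generators_free (d : ℕ) (hd : 0 < d) (r : ℕ → ℤ)
    (u : ℕ → (TruncPoly d)ˣ)
    (hu : ∀ ℓ, (u ℓ : TruncPoly d) = oneSubMulX d ℓ)
    (h : ∏ ℓ ∈ Finset.Icc 1 d, u ℓ ^ r ℓ = 1) :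
    ∀ ℓ ∈ Finset.Icc 1 d, r ℓ = 0 :=
  chern_generators_free_general d r u hu h
end

section
/- Let d be a positive integer. Consider the product group (ℤ[X]/(X^{d+1}))^× × ℤ, where the operation on the first factor is multiplication of units and on the second factor is addition of integers. For all integers r_0, r_1, ..., r_d, if ∏_{ℓ=0}^{d} (1 - ℓX)^{r_ℓ} = 1 in (ℤ[X]/(X^{d+1}))^× and r_0 + r_1 + ... + r_d = 0, then r_0 = r_1 = ... = r_d = 0. Equivalently, the d+1 elements (1, 1), (1 - X, 1), ..., (1 - dX, 1) are free generators of the subgroup of (ℤ[X]/(X^{d+1}))^× × ℤ that they generate, which is therefore free abelian of rank d+1. -/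
open PowerSeries

namespace Derivation

variable {R A : Type*} [CommRing R] [CommRing A] [Algebra R A]

def logDeriv (D : Derivation R A A) : Aˣ →* Multiplicative A where
  toFun u := Multiplicative.ofAdd (D u * ↑u⁻¹)
  map_one' := by simp
  map_mul' u v := by
    simp only [Units.val_mul, leibniz, smul_eq_mul, mul_inv_rev, ← ofAdd_add]
    congr 1
    linear_combination (D v * ↑v⁻¹) * u.mul_inv + (D u * ↑u⁻¹) * v.mul_inv

end Derivation

namespace PowerSeries

variable {R : Type*} [CommRing R]

theorem X_pow_dvd_derivative_of_X_pow_succ_dvd {n : ℕ} {f : R⟦X⟧} (h : X ^ (n + 1) ∣ f) :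
    X ^ n ∣ d⁄dX R f := by
  obtain ⟨g, rfl⟩ := h
  refine ⟨X * d⁄dX R g + ((n : R⟦X⟧) + 1) * g, ?_⟩
  rw [Derivation.leibniz, Derivation.leibniz_pow, derivative_X, smul_eq_mul, smul_eq_mul,
    nsmul_eq_mul, Nat.add_sub_cancel]
  push_cast
  ring

theorem mk_pow_mul_one_sub_C_mul_X (a : R) : mk (fun n => a ^ n) * (1 - C a * X) = 1 := by
  simpa [rescale_mk, rescale_X] using congrArg (rescale a) (mk_one_mul_one_sub_eq_one R)

noncomputable def oneSubCMulX (a : R) : R⟦X⟧ˣ where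
  val := 1 - C a * X
  inv := mk (fun n => a ^ n)
  val_inv := by rw [mul_comm, mk_pow_mul_one_sub_C_mul_X]
  inv_val := mk_pow_mul_one_sub_C_mul_X a

theorem logDeriv_oneSubCMulX (a : R) :
    (d⁄dX R).logDeriv (oneSubCMulX a) = Multiplicative.ofAdd (-mk fun n => a ^ (n + 1)) := by
  simp only [Derivation.logDeriv, oneSubCMulX, MonoidHom.coe_mk, OneHom.coe_mk]
  congr 1
  ext n
  simp [coeff_C_mul, pow_succ']

theorem sum_zsmul_pow_succ_eq_zero_of_X_pow_dvd {ι : Type*} {s : Finset ι} {a : ι → R}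
    {r : ι → ℤ} {n : ℕ} (h : X ^ (n + 1) ∣ ((∏ i ∈ s, oneSubCMulX (a i) ^ r i : R⟦X⟧ˣ) : R⟦X⟧) - 1)
    {k : ℕ} (hk : k < n) : ∑ i ∈ s, r i • a i ^ (k + 1) = 0 := by
  set U := ∏ i ∈ s, oneSubCMulX (a i) ^ r i
  have hdvd : X ^ n ∣ d⁄dX R (U : R⟦X⟧) * ((U⁻¹ : R⟦X⟧ˣ) : R⟦X⟧) := by
    have := X_pow_dvd_derivative_of_X_pow_succ_dvd h
    rw [map_sub, Derivation.map_one_eq_zero, sub_zero] at this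
    exact dvd_mul_of_dvd_left this _
  have hlog : d⁄dX R (U : R⟦X⟧) * ((U⁻¹ : R⟦X⟧ˣ) : R⟦X⟧) =
      -∑ i ∈ s, r i • mk fun n => a i ^ (n + 1) := by
    change Multiplicative.toAdd ((d⁄dX R).logDeriv U) = _
    simp only [U, map_prod, map_zpow, logDeriv_oneSubCMulX, toAdd_prod, toAdd_zpow, toAdd_ofAdd,
      smul_neg, Finset.sum_neg_distrib]
  rw [hlog, X_pow_dvd_iff] at hdvd
  simpa only [map_neg, map_sum, map_zsmul, coeff_mk, neg_eq_zero] using hdvd k hk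

end PowerSeries

namespace TruncPoly

noncomputable def toPowerSeriesQuot (d : ℕ) :
    TruncPoly d →+* ℤ⟦X⟧ ⧸ Ideal.span {(X : ℤ⟦X⟧) ^ (d + 1)} :=
  Ideal.quotientMap _ Polynomial.coeToPowerSeries.ringHom <| by
    rw [Ideal.span_le, Set.singleton_subset_iff]
    exact Ideal.subset_span (by simp)

theorem toPowerSeriesQuot_oneSubMulX (d ℓ : ℕ) :
    toPowerSeriesQuot d (oneSubMulX d ℓ) = Ideal.Quotient.mk _ (1 - C (ℓ : ℤ) * X) :=
  (Ideal.quotientMap_mk ..).trans <| congrArg _ <| by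
    rw [map_sub, map_one, map_mul, map_natCast, Polynomial.coeToPowerSeries.ringHom_apply,
      Polynomial.coe_X, map_natCast]

theorem X_pow_dvd_prod_oneSubCMulX_zpow_sub_one {d : ℕ} {s : Finset ℕ} {r : ℕ → ℤ}
    {u : ℕ → (TruncPoly d)ˣ} (hu : ∀ ℓ, (u ℓ : TruncPoly d) = oneSubMulX d ℓ)
    (h : ∏ ℓ ∈ s, u ℓ ^ r ℓ = 1) :
    X ^ (d + 1) ∣ ((∏ ℓ ∈ s, oneSubCMulX (ℓ : ℤ) ^ r ℓ : ℤ⟦X⟧ˣ) : ℤ⟦X⟧) - 1 := by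
  have hmap : ∀ ℓ, Units.map (toPowerSeriesQuot d).toMonoidHom (u ℓ) =
      Units.map (Ideal.Quotient.mk (Ideal.span {(X : ℤ⟦X⟧) ^ (d + 1)})).toMonoidHom
        (oneSubCMulX (ℓ : ℤ)) := fun ℓ => by
    ext
    simp only [Units.coe_map, RingHom.toMonoidHom_eq_coe, MonoidHom.coe_coe, hu,
      toPowerSeriesQuot_oneSubMulX, oneSubCMulX]
  suffices hU : Units.map (Ideal.Quotient.mk (Ideal.span {(X : ℤ⟦X⟧) ^ (d + 1)})).toMonoidHom
      (∏ ℓ ∈ s, oneSubCMulX (ℓ : ℤ) ^ r ℓ) = 1 by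
    rw [← Ideal.mem_span_singleton, ← Ideal.Quotient.eq, map_one]
    have hval := congrArg Units.val hU
    rw [Units.coe_map, Units.val_one] at hval
    exact hval
  rw [← map_one (Units.map (toPowerSeriesQuot d).toMonoidHom), ← h, map_prod, map_prod]
  exact Finset.prod_congr rfl fun ℓ _ => by rw [map_zpow, map_zpow, hmap]

end TruncPoly

theorem eq_zero_of_forall_sum_mul_pow_eq_zero {R : Type*} [CommRing R] [IsDomain R] [CharZero R]
    {n : ℕ} {c : ℕ → R} (h : ∀ k ≤ n, ∑ ℓ ∈ Finset.range (n + 1), c ℓ * (ℓ : R) ^ k = 0) :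
    ∀ ℓ ∈ Finset.range (n + 1), c ℓ = 0 := by
  have hc := Matrix.eq_zero_of_forall_pow_sum_mul_pow_eq_zero
    (f := fun i : Fin (n + 1) => ((i : ℕ) : R)) (v := fun i => c i)
    (Nat.cast_injective.comp Fin.val_injective)
    (fun k => by rw [← Finset.sum_range fun ℓ => c ℓ * (ℓ : R) ^ (k : ℕ)]; exact h k k.is_le)
  intro ℓ hℓ
  simpa using congrFun hc ⟨ℓ, Finset.mem_range.mp hℓ⟩

theorem chern_rank_generators_free_general (d : ℕ) (r : ℕ → ℤ)
    (u : ℕ → (TruncPoly d)ˣ)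
    (hu : ∀ ℓ, (u ℓ : TruncPoly d) = oneSubMulX d ℓ)
    (h : ∏ ℓ ∈ Finset.range (d + 1), u ℓ ^ r ℓ = 1)
    (hsum : ∑ ℓ ∈ Finset.range (d + 1), r ℓ = 0) :
    ∀ ℓ ∈ Finset.range (d + 1), r ℓ = 0 := by
  have hdvd := TruncPoly.X_pow_dvd_prod_oneSubCMulX_zpow_sub_one hu h
  refine eq_zero_of_forall_sum_mul_pow_eq_zero fun k hk => ?_
  cases k with
  | zero => simpa using hsum
  | succ k => simpa using PowerSeries.sum_zsmul_pow_succ_eq_zero_of_X_pow_dvd hdvd (by omega)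

/-- Second assertion of Lemma 3.2: the `d+1` elements
`(1, 1), (1 - X, 1), …, (1 - dX, 1)` of `(ℤ[X]/(X^(d+1)))ˣ × ℤ` are free
generators of the subgroup they generate: if
`∏_{ℓ=0}^{d} (1 - ℓX)^{r_ℓ} = 1` and `∑_{ℓ=0}^{d} r_ℓ = 0`, then all
`r_ℓ` vanish. -/
theorem chern_rank_generators_free (d : ℕ) (hd : 0 < d) (r : ℕ → ℤ)
    (u : ℕ → (TruncPoly d)ˣ)
    (hu : ∀ ℓ, (u ℓ : TruncPoly d) = oneSubMulX d ℓ)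
    (h : ∏ ℓ ∈ Finset.range (d + 1), u ℓ ^ r ℓ = 1)
    (hsum : ∑ ℓ ∈ Finset.range (d + 1), r ℓ = 0) :
    ∀ ℓ ∈ Finset.range (d + 1), r ℓ = 0 :=
  chern_rank_generators_free_general d r u hu h hsum
end

section
/- Let d be a positive integer. For all integers r_1, ..., r_d, if ∏_{ℓ=1}^{d} (1 - ℓX)^{r_ℓ} = 1 in the unit group (ℤ[X]/(X^{d+1}))^×, then for every integer k with 1 ≤ k ≤ d one has ∑_{ℓ=1}^{d} ℓ^k · r_ℓ = 0. -/
/-!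
Sending `p` to `p + p' ε` is a ring map from `ℤ[X]/(X^(d+1))` to the dual numbers over
`ℤ[X]/(X^d)`, and on units `a + b ε ↦ b / a` is a homomorphism to the additive group: together
they form the logarithmic derivative. Applied to the relation it gives
`∑ r_ℓ · ℓ / (1 - ℓX) ≡ 0 mod X^d`, and the coefficient of `X^(k-1)` in
`ℓ / (1 - ℓX) = ∑ ℓ^(i+1) X^i` is `ℓ^k`.
-/

open Polynomial TrivSqZeroExt DualNumber

namespace DualNumber
variable {A : Type*} [CommRing A]

theorem fst_mul_fst_inv (u : (A[ε])ˣ) : fst (u : A[ε]) * fst (↑u⁻¹ : A[ε]) = 1 := by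
  rw [← fst_mul, Units.mul_inv, fst_one]

noncomputable def logDeriv : (A[ε])ˣ →* Multiplicative A where
  toFun u := .ofAdd (snd (u : A[ε]) * fst (↑u⁻¹ : A[ε]))
  map_one' := by simp
  map_mul' u v := by
    simp only [Units.val_mul, mul_inv_rev, snd_mul, fst_mul, ← ofAdd_add]
    congr 1
    linear_combination (snd (u : A[ε]) * fst (↑u⁻¹ : A[ε])) * fst_mul_fst_inv v +
      (snd (v : A[ε]) * fst (↑v⁻¹ : A[ε])) * fst_mul_fst_inv u

theorem toAdd_logDeriv_eq_of_fst_mul_eq_snd (u : (A[ε])ˣ) {b : A}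
    (h : fst (u : A[ε]) * b = snd (u : A[ε])) :
    (logDeriv u).toAdd = b := by
  change snd (u : A[ε]) * fst (↑u⁻¹ : A[ε]) = b
  linear_combination (-h) * fst (↑u⁻¹ : A[ε]) + b * fst_mul_fst_inv u

end DualNumber

namespace Polynomial
variable {R A : Type*} [CommRing R] [CommRing A] [Algebra R A]

theorem aeval_inl_add_eps (x : A) (p : R[X]) :
    aeval (inl x + ε : A[ε]) p = inl (aeval x p) + inr (aeval x (derivative p)) := by
  rw [aeval_add_of_sq_eq_zero _ _ _ eps_pow_two, ← inlAlgHom_apply R A A, aeval_algHom_apply,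
    aeval_algHom_apply, inlAlgHom_apply, inlAlgHom_apply, eps, inl_mul_inr, smul_eq_mul, mul_one]

theorem aeval_inl_mk_X_add_eps (I : Ideal R[X]) (p : R[X]) :
    aeval (inl (Ideal.Quotient.mk I X) + ε) p =
      inl (Ideal.Quotient.mk I p) + inr (Ideal.Quotient.mk I (derivative p)) := by
  simp only [aeval_inl_add_eps, ← Ideal.Quotient.mkₐ_eq_mk R, aeval_algHom_apply,
    aeval_X_left_apply]

variable (R) (n : ℕ)

/-- `p ↦ p + p' ε`; it is well defined because `(X^(n+1))' = (n+1) X^n`. -/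
noncomputable def truncJet :
    R[X] ⧸ Ideal.span {(X : R[X]) ^ (n + 1)} →+* (R[X] ⧸ Ideal.span {(X : R[X]) ^ n})[ε] :=
  Ideal.Quotient.lift _ (aeval (inl (Ideal.Quotient.mk _ X) + ε)).toRingHom <| by
    intro p hp
    obtain ⟨q, rfl⟩ := Ideal.mem_span_singleton.1 hp
    have hXn : X ^ n ∈ Ideal.span {(X : R[X]) ^ n} := Ideal.mem_span_singleton_self _
    have hXn1 : X ^ (n + 1) ∈ Ideal.span {(X : R[X]) ^ n} := Ideal.mul_mem_right _ _ hXn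
    have hdXn1 : derivative (X ^ (n + 1)) ∈ Ideal.span {(X : R[X]) ^ n} := by
      rw [derivative_X_pow]; exact Ideal.mul_mem_left _ _ hXn
    rw [AlgHom.toRingHom_eq_coe, RingHom.coe_coe, map_mul, aeval_inl_mk_X_add_eps,
      Ideal.Quotient.eq_zero_iff_mem.2 hXn1, Ideal.Quotient.eq_zero_iff_mem.2 hdXn1, inl_zero,
      inr_zero, add_zero, zero_mul]

noncomputable def truncLogDeriv : (R[X] ⧸ Ideal.span {(X : R[X]) ^ (n + 1)})ˣ →*
    Multiplicative (R[X] ⧸ Ideal.span {(X : R[X]) ^ n}) :=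
  DualNumber.logDeriv.comp (Units.map (truncJet R n).toMonoidHom)

variable {R n}

theorem truncJet_mk (p : R[X]) : truncJet R n (Ideal.Quotient.mk _ p) =
    inl (Ideal.Quotient.mk _ p) + inr (Ideal.Quotient.mk _ (derivative p)) :=
  aeval_inl_mk_X_add_eps _ p

theorem one_sub_C_mul_X_mul_sum (a : R) :
    (1 - C a * X) * ∑ i ∈ Finset.range n, C (a ^ (i + 1)) * X ^ i =
      C a - C (a ^ (n + 1)) * X ^ n := by
  induction n with
  | zero => simp
  | succ n ih =>
    rw [Finset.sum_range_succ, mul_add, ih]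
    simp only [pow_succ, C_mul]
    ring

theorem coeff_sum_C_pow_mul_X_pow (a : R) {j : ℕ} (hj : j < n) :
    (∑ i ∈ Finset.range n, C (a ^ (i + 1)) * X ^ i).coeff j = a ^ (j + 1) := by
  simp only [finsetSum_coeff, coeff_C_mul_X_pow]
  rw [Finset.sum_ite_eq (Finset.range n) j]
  simp [hj]

theorem toAdd_truncLogDeriv_of_eq_mk_one_sub_C_mul_X
    (u : (R[X] ⧸ Ideal.span {(X : R[X]) ^ (n + 1)})ˣ) (a : R)
    (hu : (u : R[X] ⧸ Ideal.span {(X : R[X]) ^ (n + 1)}) = Ideal.Quotient.mk _ (1 - C a * X)) :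
    (truncLogDeriv R n u).toAdd =
      -Ideal.Quotient.mk _ (∑ i ∈ Finset.range n, C (a ^ (i + 1)) * X ^ i) := by
  apply toAdd_logDeriv_eq_of_fst_mul_eq_snd
  change fst (truncJet R n u) * _ = snd (truncJet R n u)
  rw [hu, truncJet_mk, fst_add, snd_add, fst_inl, fst_inr, snd_inl, snd_inr, add_zero, zero_add,
    ← map_neg, ← map_mul, Ideal.Quotient.eq, Ideal.mem_span_singleton, mul_neg,
    one_sub_C_mul_X_mul_sum]
  exact ⟨C (a ^ (n + 1)), by simp; ring⟩

theorem sum_zsmul_pow_succ_eq_zero_of_sum_zsmul_mk_eq_zero {ι : Type*} (s : Finset ι)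
    (c : ι → ℤ) (a : ι → R)
    (h : ∑ i ∈ s, c i • Ideal.Quotient.mk (Ideal.span {(X : R[X]) ^ n})
      (∑ m ∈ Finset.range n, C (a i ^ (m + 1)) * X ^ m) = 0) {j : ℕ} (hj : j < n) :
    ∑ i ∈ s, c i • a i ^ (j + 1) = 0 := by
  simp only [← map_zsmul, ← map_sum, Ideal.Quotient.eq_zero_iff_mem, Ideal.mem_span_singleton,
    X_pow_dvd_iff] at h
  simpa only [finsetSum_coeff, coeff_smul, coeff_sum_C_pow_mul_X_pow _ hj] using h j hj

end Polynomial

theorem power_sums_vanish_general (d : ℕ) (r : ℕ → ℤ)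
    (u : ℕ → (TruncPoly d)ˣ)
    (hu : ∀ ℓ, (u ℓ : TruncPoly d) = oneSubMulX d ℓ)
    (h : ∏ ℓ ∈ Finset.Icc 1 d, u ℓ ^ r ℓ = 1) :
    ∀ k ∈ Finset.Icc 1 d, ∑ ℓ ∈ Finset.Icc 1 d, (ℓ : ℤ) ^ k * r ℓ = 0 := by
  intro k hk
  obtain ⟨hk1, hkd⟩ := Finset.mem_Icc.1 hk
  let φ : (TruncPoly d)ˣ →* Multiplicative (ℤ[X] ⧸ Ideal.span {(X : ℤ[X]) ^ d}) :=
    truncLogDeriv ℤ d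
  have hφ (ℓ : ℕ) : (φ (u ℓ)).toAdd =
      -Ideal.Quotient.mk _ (∑ i ∈ Finset.range d, C ((ℓ : ℤ) ^ (i + 1)) * X ^ i) :=
    toAdd_truncLogDeriv_of_eq_mk_one_sub_C_mul_X (u ℓ) ℓ (by rw [hu ℓ, oneSubMulX, map_natCast])
  have hlog := congrArg (fun v => (φ v).toAdd) h
  simp only [map_prod, map_zpow, toAdd_prod, toAdd_zpow, hφ, map_one, toAdd_one, smul_neg,
    Finset.sum_neg_distrib, neg_eq_zero] at hlog
  have hpow := sum_zsmul_pow_succ_eq_zero_of_sum_zsmul_mk_eq_zero _ r (fun ℓ : ℕ => (ℓ : ℤ))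
    hlog (by omega : k - 1 < d)
  rw [Nat.sub_add_cancel hk1] at hpow
  simpa only [smul_eq_mul, mul_comm] using hpow

/-- Key intermediate step in the proof of Lemma 3.2: if
`∏_{ℓ=1}^{d} (1 - ℓX)^{r_ℓ} = 1` in `(ℤ[X]/(X^(d+1)))ˣ`, then the power
sums `∑_{ℓ=1}^{d} ℓ^k · r_ℓ` vanish for `k = 1, …, d`. -/
theorem power_sums_vanish (d : ℕ) (hd : 0 < d) (r : ℕ → ℤ)
    (u : ℕ → (TruncPoly d)ˣ)
    (hu : ∀ ℓ, (u ℓ : TruncPoly d) = oneSubMulX d ℓ)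
    (h : ∏ ℓ ∈ Finset.Icc 1 d, u ℓ ^ r ℓ = 1) :
    ∀ k ∈ Finset.Icc 1 d, ∑ ℓ ∈ Finset.Icc 1 d, (ℓ : ℤ) ^ k * r ℓ = 0 :=
  power_sums_vanish_general d r u hu h
end

section
/- Let d be a nonnegative integer and m an integer. Work in the ring of formal power series in one variable X over the polynomial ring ℚ[t]. Let E be the power series whose n-th coefficient is (t - m)^n / n! (the expansion of e^{(t-m)X}), and let Q be the power series whose n-th coefficient is the constant polynomial (-1)^n / (n+1)! (the expansion of (1 - e^{-X})/X); Q has constant coefficient 1, hence is a unit. Then the coefficient of X^d in E · Q^{-(d+1)} equals the polynomial (1/d!) · ∏_{i=1}^{d} (t - m + i) in ℚ[t], i.e. it equals binom(t + d - m, d). -/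
/-!
Put `s = t - m`, `E = e^{sX}`, `Q = (1 - e^{-X})/X` and `B = Q⁻¹`. Differentiating
`X Q = 1 - e^{-X}` gives `X Q' = 1 - Q - X Q`, so `B` satisfies the Riccati equation
`X B' = B + X B - B²`, while `E' = s E`. Comparing the
coefficients of `X^{n+1}` in `X (E Bⁿ⁺¹)'` then gives the recurrence
`(n+1)·[X^{n+1}] E Bⁿ⁺² = (s + n + 1)·[Xⁿ] E Bⁿ⁺¹`, and as `[X⁰] E B = 1`,
`n!·[Xⁿ] E Bⁿ⁺¹ = ∏_{i=1}^{n} (s + i)`.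
-/

open PowerSeries

/-- `e^{(t-m)X}` over `ℚ[t]`, where `Polynomial.X` plays the role of `t`. -/
noncomputable def expSeries (m : ℤ) : PowerSeries (Polynomial ℚ) :=
  PowerSeries.mk fun n =>
    ((n.factorial : ℚ))⁻¹ • (Polynomial.X - Polynomial.C (m : ℚ)) ^ n

/-- `(1 - e^{-X})/X` over `ℚ[t]`. -/
noncomputable def toddDenom : PowerSeries (Polynomial ℚ) :=
  PowerSeries.mk fun n => Polynomial.C ((-1 : ℚ) ^ n / ((n + 1).factorial : ℚ))

namespace PowerSeries

section Recurrence

variable {R : Type*} [CommRing R]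

theorem derivative_rescale (a : R) (f : R⟦X⟧) :
    d⁄dX R (rescale a f) = C a * rescale a (d⁄dX R f) := by
  ext n
  simp only [coeff_derivative, coeff_rescale, coeff_C_mul]
  ring

theorem X_mul_derivative_of_mul_eq_one {B Q : R⟦X⟧} (hBQ : B * Q = 1)
    (hQ : X * d⁄dX R Q = 1 - Q - X * Q) :
    X * d⁄dX R B = B + X * B - B ^ 2 := by
  have hD : d⁄dX R B * Q + B * d⁄dX R Q = 0 := by
    simpa [Derivation.leibniz, add_comm, mul_comm] using congrArg (d⁄dX R) hBQ
  linear_combination (X * B) * hD - B ^ 2 * hQ + (B + X * B - X * d⁄dX R B) * hBQ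

theorem succ_mul_coeff_succ_mul_pow {E B : R⟦X⟧} {s : R} (hE : d⁄dX R E = C s * E)
    (hB : X * d⁄dX R B = B + X * B - B ^ 2) (n : ℕ) :
    (n + 1 : R) * coeff (n + 1) (E * B ^ (n + 2))
      = (s + (n + 1)) * coeff n (E * B ^ (n + 1)) := by
  have hX : X * d⁄dX R (E * B ^ (n + 1))
      = C (n + 1 : R) * (E * B ^ (n + 1)) + X * (C (s + (n + 1)) * (E * B ^ (n + 1)))
        - C (n + 1 : R) * (E * B ^ (n + 2)) := by
    rw [Derivation.leibniz, Derivation.leibniz_pow, hE]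
    simp only [smul_eq_mul, nsmul_eq_mul, map_add, map_natCast, map_one, Nat.add_sub_cancel]
    push_cast
    linear_combination ((n + 1) * E * B ^ n) * hB
  have h := congrArg (coeff (n + 1)) hX
  rw [coeff_succ_X_mul, coeff_derivative, map_sub, map_add, coeff_succ_X_mul, coeff_C_mul,
    coeff_C_mul, coeff_C_mul] at h
  linear_combination h

theorem factorial_mul_coeff_mul_pow_succ {E B : R⟦X⟧} {s : R} (hE : d⁄dX R E = C s * E)
    (hB : X * d⁄dX R B = B + X * B - B ^ 2) (hE₀ : constantCoeff E = 1)
    (hB₀ : constantCoeff B = 1) (n : ℕ) :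
    (n.factorial : R) * coeff n (E * B ^ (n + 1)) = ∏ i ∈ Finset.Icc 1 n, (s + i) := by
  induction n with
  | zero => simp [hE₀, hB₀]
  | succ n ih =>
    calc ((n + 1).factorial : R) * coeff (n + 1) (E * B ^ (n + 2))
        = n.factorial * ((n + 1 : R) * coeff (n + 1) (E * B ^ (n + 2))) := by
          push_cast [Nat.factorial_succ]; ring
      _ = (n.factorial * coeff n (E * B ^ (n + 1))) * (s + (n + 1 : ℕ)) := by
          rw [succ_mul_coeff_succ_mul_pow hE hB]; push_cast; ring
      _ = ∏ i ∈ Finset.Icc 1 (n + 1), (s + i) := by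
          rw [ih, Finset.prod_Icc_succ_top (Nat.le_add_left 1 n)]

end Recurrence

theorem derivative_rescale_exp {A : Type*} [CommRing A] [Algebra ℚ A] (a : A) :
    d⁄dX A (rescale a (exp A)) = C a * rescale a (exp A) := by
  rw [derivative_rescale, derivative_exp]

theorem X_mul_derivative_eq_of_X_mul_eq_one_sub_exp {A : Type*} [CommRing A] [Algebra ℚ A]
    {Q : A⟦X⟧} (hQ : X * Q = 1 - rescale (-1) (exp A)) :
    X * d⁄dX A Q = 1 - Q - X * Q := by
  have h := congrArg (d⁄dX A) hQ
  rw [Derivation.leibniz, derivative_X, map_sub, derivative_one, derivative_rescale_exp] at h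
  simp only [smul_eq_mul, mul_one, map_neg, map_one] at h
  linear_combination h + hQ

end PowerSeries

theorem expSeries_eq_rescale_exp (m : ℤ) :
    expSeries m = rescale (Polynomial.X - Polynomial.C (m : ℚ)) (exp (Polynomial ℚ)) := by
  ext n
  rw [coeff_rescale, coeff_exp, expSeries, coeff_mk, Polynomial.smul_eq_C_mul,
    Polynomial.algebraMap_eq, one_div, mul_comm]

theorem X_mul_toddDenom :
    X * toddDenom = 1 - rescale (-1 : Polynomial ℚ) (exp (Polynomial ℚ)) := by
  ext1 n
  rcases n with _ | k
  · simp [map_sub, coeff_rescale]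
  · rw [coeff_succ_X_mul, map_sub, coeff_one, if_neg k.succ_ne_zero, coeff_rescale, coeff_exp,
      toddDenom, coeff_mk, Polynomial.algebraMap_eq, ← Polynomial.C_1, ← Polynomial.C_neg,
      ← map_pow, ← map_mul, zero_sub, ← map_neg]
    congr 1
    rw [pow_succ]
    ring

theorem constantCoeff_expSeries (m : ℤ) : constantCoeff (expSeries m) = 1 := by
  simp [expSeries, ← coeff_zero_eq_constantCoeff_apply]

theorem constantCoeff_toddDenom : constantCoeff toddDenom = 1 := by
  simp [toddDenom, ← coeff_zero_eq_constantCoeff_apply]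

/-- The Hirzebruch–Riemann–Roch computation for `𝒪(-m)` on `ℙ^d`
(equation (eqCP) of Proposition 4.3.A in the case `ℳ = 𝒪(-m)`):
the coefficient of `X^d` in `e^{(t-m)X} · (X/(1 - e^{-X}))^{d+1}` is the
Hilbert polynomial `binom(t + d - m, d) = (1/d!) · ∏_{i=1}^{d} (t - m + i)`. -/
theorem hrr_twisted_sheaf (d : ℕ) (m : ℤ)
    (v : (PowerSeries (Polynomial ℚ))ˣ)
    (hv : (v : PowerSeries (Polynomial ℚ)) = toddDenom) :
    PowerSeries.coeff (R := Polynomial ℚ) d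
        (expSeries m * ((v⁻¹ : (PowerSeries (Polynomial ℚ))ˣ) : PowerSeries (Polynomial ℚ)) ^ (d + 1))
      = ((d.factorial : ℚ))⁻¹ •
          ∏ i ∈ Finset.Icc 1 d, (Polynomial.X + Polynomial.C ((i : ℚ) - (m : ℚ))) := by
  set B := ((v⁻¹ : (PowerSeries (Polynomial ℚ))ˣ) : PowerSeries (Polynomial ℚ))
  have hBQ : B * toddDenom = 1 := by
    rw [← hv]
    exact v.inv_mul
  have hB₀ : constantCoeff B = 1 := by
    simpa [constantCoeff_toddDenom] using congrArg constantCoeff hBQ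
  have hE := derivative_rescale_exp (Polynomial.X - Polynomial.C (m : ℚ))
  rw [← expSeries_eq_rescale_exp] at hE
  have hB := X_mul_derivative_of_mul_eq_one hBQ
    (X_mul_derivative_eq_of_X_mul_eq_one_sub_exp X_mul_toddDenom)
  have hfac := factorial_mul_coeff_mul_pow_succ hE hB (constantCoeff_expSeries m) hB₀ d
  rw [eq_inv_smul_iff₀ (by positivity), Nat.cast_smul_eq_nsmul, nsmul_eq_mul, hfac]
  refine Finset.prod_congr rfl fun i _ => ?_
  rw [map_sub, map_natCast]
  ring
end
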